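/- If X is a well-ordering, then ω^X (finite non-increasing sequences from X with the lexicographic order) is also a well-ordering. -/

import Mathlib

/-!
A non-increasing list `a :: l` is accessible once every non-increasing list with head below `a`
is, and `l` is: anything lexicographically below `a :: l` either starts with some `b < a`, or
is `a :: m` with `m` below `l`. Well-founded induction on the head `a`, nested with structural
induction on the tail (whose head is `< a` or `= a`), then makes every list accessible.
-/

namespace List

variable {α : Type*} [LinearOrder α]

/-- The order of `ω^α`; `List.chains (· ≤ ·)` are the non-increasing lists. -/
abbrev LexLTChains (l m : List.chains (α := α) (· ≤ ·)) : Prop :=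
  List.Lex (· < ·) l.val m.val

theorem acc_lexLTChains_nil (h : ([] : List α).IsChain (· ≥ ·)) :
    Acc LexLTChains (⟨[], h⟩ : List.chains (· ≤ ·)) :=
  .intro _ fun ⟨_, _⟩ hlt => nomatch hlt

theorem acc_lexLTChains_cons_of_acc_tail {a : α}
    (hlt : ∀ b < a, ∀ m (h : (b :: m).IsChain (· ≥ ·)), Acc LexLTChains ⟨b :: m, h⟩)
    {l : List.chains (· ≤ ·)} (hl : Acc LexLTChains l) (h : (a :: l.val).IsChain (· ≥ ·)) :
    Acc LexLTChains (⟨a :: l.val, h⟩ : List.chains (· ≤ ·)) := by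
  induction hl with
  | intro l _ ih =>
    refine .intro _ fun m hm => ?_
    obtain ⟨m, hmc⟩ := m
    cases hm with
    | nil => exact acc_lexLTChains_nil hmc
    | rel hba => exact hlt _ hba _ hmc
    | cons hml => exact ih ⟨_, hmc.tail⟩ hml hmc

theorem acc_lexLTChains_cons {a : α} (ha : Acc (· < ·) a) (l : List α)
    (h : (a :: l).IsChain (· ≥ ·)) :
    Acc LexLTChains (⟨a :: l, h⟩ : List.chains (· ≤ ·)) := by
  induction ha generalizing l with
  | intro a _ iha =>
    induction l with
    | nil => exact acc_lexLTChains_cons_of_acc_tail iha (acc_lexLTChains_nil .nil) h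
    | cons b l ihl =>
      have hba : b ≤ a := (isChain_cons_cons.1 h).1
      have htail : Acc LexLTChains (⟨b :: l, h.tail⟩ : List.chains (· ≤ ·)) := by
        rcases hba.lt_or_eq with hba | rfl
        · exact iha b hba l h.tail
        · exact ihl h.tail
      exact acc_lexLTChains_cons_of_acc_tail iha htail h

theorem wellFounded_lexLTChains (hα : WellFounded ((· < ·) : α → α → Prop)) :
    WellFounded (LexLTChains (α := α)) := by
  refine ⟨fun ⟨l, h⟩ => ?_⟩
  cases l with
  | nil => exact acc_lexLTChains_nil h
  | cons a l => exact acc_lexLTChains_cons (hα.apply a) l h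

end List

/-- If `X` is a well-ordering, then `ω^X` (finite non-increasing
sequences from `X` with the lexicographic order) is also a well-ordering, i.e.
its strict order is well-founded. -/
theorem omega_pow_wellFounded {X : Type*} [LinearOrder X]
    (hX : WellFounded ((· < ·) : X → X → Prop)) :
    WellFounded
      (fun σ τ : {l : List X // l.Chain' (· ≥ ·)} => List.Lex (· < ·) σ.1 τ.1) :=
  List.wellFounded_lexLTChains hX
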